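/- Let R4, H, F4, F6, T4 be real numbers satisfying (i) T4/5 = R4/2 + H + F4 + F6 and (ii) (9/2)*R4 = −3*H − 3*F4 − 6*F6 + (3/5)*T4. Then R4 = −F6. In particular, if F6 ≥ 0 then R4 ≤ 0, and if furthermore F6 = 0 then R4 = 0. -/

import Mathlib

theorem stmt11 (R4 H F4 F6 T4 : ℝ)
    (h1 : T4 / 5 = R4 / 2 + H + F4 + F6)
    (h2 : (9 / 2) * R4 = -3 * H - 3 * F4 - 6 * F6 + (3 / 5) * T4) :
    R4 = -F6 ∧ (0 ≤ F6 → R4 ≤ 0) ∧ (F6 = 0 → R4 = 0) := by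
  -- Adding 3·(i) to (ii) eliminates T4, H and F4 at once, leaving 3 R4 = -3 F6.
  have hR4 : R4 = -F6 := by linear_combination (h2 + 3 * h1) / 3
  refine ⟨hR4, fun hF6 => ?_, fun hF6 => ?_⟩
  · linarith
  · rw [hR4, hF6, neg_zero]
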